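/- Fix α ∈ (0,1/2) and ε ∈ (0,α), and suppose real random variables U and V satisfy d_L(L(U), L(V)) ≤ ε, where d_L is the Lévy metric. Then their (1−α)-quantiles satisfy |F_U^{-1}(1−α) − F_V^{-1}(1−α)| ≤ F_U^{-1}(1−α+ε) − F_U^{-1}(1−α−ε) + ε. -/

import Mathlib

open MeasureTheory ProbabilityTheory

/-- The c.d.f. of a random variable. -/
noncomputable def rvCdf {Ω : Type*} [MeasureSpace Ω] (X : Ω → ℝ) (x : ℝ) : ℝ :=
  (ℙ {ω | X ω ≤ x}).toReal

/-- The generalized inverse (quantile function) `F_X^{-1}(β) = inf{z : F_X(z) ≥ β}`. -/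
noncomputable def rvQuantile {Ω : Type*} [MeasureSpace Ω] (X : Ω → ℝ) (β : ℝ) : ℝ :=
  sInf {z : ℝ | β ≤ rvCdf X z}

/-!
The Lévy sandwich moves every point of `{z | β + ε ≤ F_U z}` by `ε` into `{z | β ≤ F_V z}`,
and every point of `{z | β ≤ F_V z}` by `ε` into `{z | β - ε ≤ F_U z}`; taking infima gives
`F_U⁻¹(β - ε) - ε ≤ F_V⁻¹(β) ≤ F_U⁻¹(β + ε) + ε`, while `F_U⁻¹(β)` lies between
`F_U⁻¹(β - ε)` and `F_U⁻¹(β + ε)` by monotonicity.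
-/

lemma Real.sInf_le_sInf_add {S T : Set ℝ} (hS : S.Nonempty) (hT : BddBelow T) {ε : ℝ}
    (h : ∀ z ∈ S, z + ε ∈ T) : sInf T ≤ sInf S + ε := by
  have : sInf T - ε ≤ sInf S := le_csInf hS fun z hz => by linarith [csInf_le hT (h z hz)]
  linarith

lemma ProbabilityTheory.nonempty_setOf_le_cdf (μ : Measure ℝ) [IsProbabilityMeasure μ]
    {β : ℝ} (hβ : β < 1) : {z : ℝ | β ≤ cdf μ z}.Nonempty :=
  ((tendsto_cdf_atTop μ).eventually (eventually_ge_nhds hβ)).exists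

lemma ProbabilityTheory.bddBelow_setOf_le_cdf (μ : Measure ℝ) [IsProbabilityMeasure μ]
    {β : ℝ} (hβ : 0 < β) : BddBelow {z : ℝ | β ≤ cdf μ z} := by
  obtain ⟨b, hb⟩ := ((tendsto_cdf_atBot μ).eventually (eventually_lt_nhds hβ)).exists
  exact ⟨b, fun z hz => le_of_not_gt fun hzb => (hz.trans ((cdf μ).mono hzb.le)).not_gt hb⟩

section Quantile

variable {Ω : Type*} [MeasureSpace Ω] [IsProbabilityMeasure (ℙ : Measure Ω)]

lemma rvCdf_eq_cdf_map {X : Ω → ℝ} (hX : Measurable X) : rvCdf X = cdf (Measure.map X ℙ) := by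
  have : IsProbabilityMeasure (Measure.map X ℙ) := Measure.isProbabilityMeasure_map hX.aemeasurable
  ext x
  rw [cdf_eq_real, measureReal_def, Measure.map_apply hX measurableSet_Iic]
  rfl

lemma rvQuantile_le_rvQuantile_add {X Y : Ω → ℝ} (hX : Measurable X) (hY : Measurable Y)
    {β γ ε : ℝ} (hβ : β < 1) (hγ : 0 < γ) (h : ∀ z, β ≤ rvCdf X z → γ ≤ rvCdf Y (z + ε)) :
    rvQuantile Y γ ≤ rvQuantile X β + ε := by
  have : IsProbabilityMeasure (Measure.map X ℙ) := Measure.isProbabilityMeasure_map hX.aemeasurable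
  have : IsProbabilityMeasure (Measure.map Y ℙ) := Measure.isProbabilityMeasure_map hY.aemeasurable
  exact Real.sInf_le_sInf_add (rvCdf_eq_cdf_map hX ▸ nonempty_setOf_le_cdf _ hβ)
    (rvCdf_eq_cdf_map hY ▸ bddBelow_setOf_le_cdf _ hγ) h

lemma rvQuantile_mono {X : Ω → ℝ} (hX : Measurable X) {β γ : ℝ} (hγ : 0 < γ) (hβ : β < 1)
    (hγβ : γ ≤ β) : rvQuantile X γ ≤ rvQuantile X β := by
  simpa using rvQuantile_le_rvQuantile_add (ε := 0) hX hX hβ hγ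
    fun z hz => by simpa using hγβ.trans hz

end Quantile

/-- If the Lévy distance between `L(U)` and `L(V)` is at most `ε` (i.e. the ε-sandwich
`F_U(x−ε)−ε ≤ F_V(x) ≤ F_U(x+ε)+ε` holds for all `x`), with `0 < ε < α < 1/2`, then
`|F_U^{-1}(1−α) − F_V^{-1}(1−α)| ≤ F_U^{-1}(1−α+ε) − F_U^{-1}(1−α−ε) + ε`. -/
theorem quantile_levy_bound {Ω : Type*} [MeasureSpace Ω]
    [IsProbabilityMeasure (ℙ : Measure Ω)]
    (U V : Ω → ℝ) (hU : Measurable U) (hV : Measurable V)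
    (α ε : ℝ) (hα : α ∈ Set.Ioo (0 : ℝ) (1 / 2)) (hε : ε ∈ Set.Ioo 0 α)
    (hLevy : ∀ x : ℝ, rvCdf U (x - ε) - ε ≤ rvCdf V x ∧ rvCdf V x ≤ rvCdf U (x + ε) + ε) :
    |rvQuantile U (1 - α) - rvQuantile V (1 - α)|
      ≤ rvQuantile U (1 - α + ε) - rvQuantile U (1 - α - ε) + ε := by
  obtain ⟨hα0, hα2⟩ := hα
  obtain ⟨hε0, hεα⟩ := hε
  have hVU : rvQuantile V (1 - α) ≤ rvQuantile U (1 - α + ε) + ε :=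
    rvQuantile_le_rvQuantile_add hU hV (by linarith) (by linarith) fun z hz => by
      have hz' := (hLevy (z + ε)).1
      rw [add_sub_cancel_right] at hz'
      linarith
  have hUV : rvQuantile U (1 - α - ε) ≤ rvQuantile V (1 - α) + ε :=
    rvQuantile_le_rvQuantile_add hV hU (by linarith) (by linarith) fun z hz => by
      linarith [(hLevy z).2]
  have hlow := rvQuantile_mono hU (β := 1 - α) (γ := 1 - α - ε) (by linarith) (by linarith)
    (by linarith)
  have hupp := rvQuantile_mono hU (β := 1 - α + ε) (γ := 1 - α) (by linarith) (by linarith)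
    (by linarith)
  rw [abs_le]
  constructor <;> linarith
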